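/- arXiv:2504.21204 — 3 statements merged into one kernel-verified Lean document; each statement's English description precedes it below -/
import Mathlib

section
/- Let q be odd, k ≥ 2, and l odd with gcd(2^{k+1}q, l) = 1. The small subgroup 𝔻 of U(2) generated by ψ = diag(ζ_{2q}, ζ_{2q}^{-1}) and τφ, where τ = [[0,i],[i,0]] and φ = diag(ζ_{4m}, ζ_{4m}) with m = 2^{k-1}l, is isomorphic to the direct product D_{2^{k+1}q} × C_l, where D_{2^{k+1}q} = ⟨x,y | x^{2^{k+1}} = 1, y^q = 1, xyx⁻¹ = y⁻¹⟩ and C_l is cyclic of order l. -/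
/-!
Write `B = ψ = diag(ω, ω⁻¹)` and `A = τφ = antidiag(c, c)`, where `c = i ζ_{4m} = ζ_{4m}^{m+1}`
is again a primitive `4m`-th root of unity because `m` is even. Even powers of `A` are scalars and
odd powers are antidiagonal, so `A` has order `4m = 2^{k+1} l`, and conjugation by any
antidiagonal matrix inverts `B²`. Split `A = A^α A^β` by the Chinese remainder theorem
(`α ≡ 1 mod 2^{k+1}`, `α ≡ 0 mod l`, and the other way round for `β`): then `x = A^α`, `y = B²`
and the central scalar `z = A^β` satisfy the relations of `D_{2^{k+1}q} × C_l`, and they still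
generate `⟨A, B⟩` because `B = B^{q+1} A^{2m}` (both `B^q` and `A^{2m}` equal `-1`). Every element
of `D_{2^{k+1}q} × C_l` is `y^j x^i z^n`, and comparing diagonal entries shows that
`y^j x^i z^n = 1` forces `2^{k+1} ∣ i`, `q ∣ j` and `l ∣ n`, so the induced map is injective.
-/

noncomputable section

open Matrix

/-- ζ_n = e^{2πi/n}. -/
def zeta (n : ℕ) : ℂ := Complex.exp (2 * Real.pi * Complex.I / n)

/-- Relators of D_{2^{k+1}q} = ⟨x,y | x^{2^{k+1}} = 1, y^q = 1, xyx⁻¹ = y⁻¹⟩,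
with x = of 0, y = of 1. -/
def dihRels (k q : ℕ) : Set (FreeGroup (Fin 2)) :=
  {FreeGroup.of 0 ^ 2 ^ (k + 1), FreeGroup.of 1 ^ q,
   FreeGroup.of 0 * FreeGroup.of 1 * (FreeGroup.of 0)⁻¹ * FreeGroup.of 1}

theorem exists_eq_pow_mul_pow_of_mem_closure_pair {G : Type*} [Group G] {x y : G}
    (hx : IsOfFinOrder x) (hy : IsOfFinOrder y) (hxy : x * y * x⁻¹ = y⁻¹) {g : G}
    (hg : g ∈ Subgroup.closure {x, y}) : ∃ i j : ℕ, g = y ^ j * x ^ i := by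
  obtain ⟨a, ha⟩ : ∃ a : ℕ, x ^ a = x⁻¹ :=
    hx.mem_powers_iff_mem_zpowers.2 (inv_mem (Subgroup.mem_zpowers x))
  obtain ⟨b, hb⟩ : ∃ b : ℕ, y ^ b = y⁻¹ :=
    hy.mem_powers_iff_mem_zpowers.2 (inv_mem (Subgroup.mem_zpowers y))
  have hxy' : x⁻¹ * y * x⁻¹⁻¹ = y⁻¹ := by
    conv_lhs => rw [← inv_inv y, ← hxy]
    group
  have swap : ∀ u, u * y * u⁻¹ = y⁻¹ → ∀ j : ℕ, u * y ^ j = y ^ (b * j) * u := fun u hu j => by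
    rw [pow_mul, hb, ← hu, conj_pow, inv_mul_cancel_right]
  induction hg using Subgroup.closure_induction_left with
  | one => exact ⟨0, 0, by simp⟩
  | mul_left u hu g _ ih =>
    obtain ⟨i, j, rfl⟩ := ih
    rcases hu with rfl | rfl
    · exact ⟨i + 1, b * j, by rw [← mul_assoc, swap u hxy, mul_assoc, pow_succ']⟩
    · exact ⟨i, j + 1, by rw [← mul_assoc, pow_succ']⟩
  | inv_mul_cancel u hu g _ ih =>
    obtain ⟨i, j, rfl⟩ := ih
    rcases hu with rfl | rfl
    · exact ⟨a + i, b * j, by rw [← mul_assoc, swap _ hxy', mul_assoc, pow_add, ha]⟩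
    · exact ⟨i, b + j, by rw [← mul_assoc, pow_add, hb]⟩

section dihRels

variable {k q : ℕ}

theorem dihRels_of_zero_pow :
    (PresentedGroup.of 0 : PresentedGroup (dihRels k q)) ^ 2 ^ (k + 1) = 1 :=
  PresentedGroup.one_of_mem (Set.mem_insert _ _)

theorem dihRels_of_one_pow : (PresentedGroup.of 1 : PresentedGroup (dihRels k q)) ^ q = 1 :=
  PresentedGroup.one_of_mem (Set.mem_insert_of_mem _ (Set.mem_insert _ _))

theorem dihRels_conj_of_one :
    PresentedGroup.of 0 * PresentedGroup.of 1 * (PresentedGroup.of 0)⁻¹ =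
      (PresentedGroup.of 1 : PresentedGroup (dihRels k q))⁻¹ :=
  eq_inv_of_mul_eq_one_left <|
    PresentedGroup.one_of_mem (Set.mem_insert_of_mem _ (Set.mem_insert_of_mem _ rfl))

theorem dihRels_exists_eq_pow_mul_pow (hq : 0 < q) (d : PresentedGroup (dihRels k q)) :
    ∃ i j : ℕ, d = PresentedGroup.of 1 ^ j * PresentedGroup.of 0 ^ i := by
  refine exists_eq_pow_mul_pow_of_mem_closure_pair
    (isOfFinOrder_iff_pow_eq_one.2 ⟨_, by positivity, dihRels_of_zero_pow⟩)
    (isOfFinOrder_iff_pow_eq_one.2 ⟨_, hq, dihRels_of_one_pow⟩) dihRels_conj_of_one ?_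
  have hrange : Set.range (PresentedGroup.of (rels := dihRels k q)) =
      {PresentedGroup.of 0, PresentedGroup.of 1} := by
    simp [Set.ext_iff, Fin.exists_fin_two, eq_comm]
  rw [← hrange, PresentedGroup.closure_range_of]
  trivial

theorem dihRels_lift_eq_one {G : Type*} [Group G] {x y : G} (hx : x ^ 2 ^ (k + 1) = 1)
    (hy : y ^ q = 1) (hxy : x * y * x⁻¹ = y⁻¹) :
    ∀ r ∈ dihRels k q, FreeGroup.lift ![x, y] r = 1 := by
  rintro r (rfl | rfl | rfl) <;> simp [hx, hy, hxy]

end dihRels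

def zmodPowHom {G : Type*} [Group G] {n : ℕ} (z : G) (hz : z ^ n = 1) :
    Multiplicative (ZMod n) →* G :=
  AddMonoidHom.toMultiplicativeLeft <|
    ZMod.lift n ⟨zmultiplesHom _ (Additive.ofMul z), by simp [← ofMul_pow, hz]⟩

theorem zmodPowHom_ofAdd_intCast {G : Type*} [Group G] {n : ℕ} (z : G) (hz : z ^ n = 1)
    (i : ℤ) : zmodPowHom z hz (Multiplicative.ofAdd (i : ZMod n)) = z ^ i := by
  change Additive.toMul (ZMod.lift n _ (i : ZMod n)) = z ^ i
  rw [ZMod.lift_coe]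
  simp

theorem zmodPowHom_ofAdd_natCast {G : Type*} [Group G] {n : ℕ} (z : G) (hz : z ^ n = 1)
    (i : ℕ) : zmodPowHom z hz (Multiplicative.ofAdd (i : ZMod n)) = z ^ i := by
  simpa using zmodPowHom_ofAdd_intCast z hz i

section dihRelsProdHom

variable {G : Type*} [Group G] {k q l : ℕ} {x y z : G}

def dihRelsProdHom (hx : x ^ 2 ^ (k + 1) = 1) (hy : y ^ q = 1)
    (hxy : x * y * x⁻¹ = y⁻¹) (hz : z ^ l = 1) (hzc : ∀ g, Commute z g) :
    PresentedGroup (dihRels k q) × Multiplicative (ZMod l) →* G :=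
  (PresentedGroup.toGroup (dihRels_lift_eq_one hx hy hxy)).noncommCoprod (zmodPowHom z hz)
    fun d t => by
      obtain ⟨i, hi⟩ := ZMod.intCast_surjective (Multiplicative.toAdd t)
      rw [← ofAdd_toAdd t, ← hi, zmodPowHom_ofAdd_intCast]
      exact ((hzc _).zpow_left i).symm

theorem dihRelsProdHom_apply (hx : x ^ 2 ^ (k + 1) = 1) (hy : y ^ q = 1)
    (hxy : x * y * x⁻¹ = y⁻¹) (hz : z ^ l = 1) (hzc : ∀ g, Commute z g) (i j n : ℕ) :
    dihRelsProdHom hx hy hxy hz hzc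
        (PresentedGroup.of 1 ^ j * PresentedGroup.of 0 ^ i, Multiplicative.ofAdd (n : ZMod l)) =
      y ^ j * x ^ i * z ^ n := by
  simp [dihRelsProdHom, PresentedGroup.toGroup.of, zmodPowHom_ofAdd_natCast]

theorem dihRelsProd_exists_eq_pow_mul_pow (hq : 0 < q) (hl : 0 < l)
    (p : PresentedGroup (dihRels k q) × Multiplicative (ZMod l)) :
    ∃ i j n : ℕ, p = (PresentedGroup.of 1 ^ j * PresentedGroup.of 0 ^ i,
      Multiplicative.ofAdd (n : ZMod l)) := by
  have : NeZero l := ⟨hl.ne'⟩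
  obtain ⟨d, t⟩ := p
  obtain ⟨i, j, rfl⟩ := dihRels_exists_eq_pow_mul_pow hq d
  exact ⟨i, j, (Multiplicative.toAdd t).val, by simp⟩

theorem dihRelsProdHom_injective (hq : 0 < q) (hl : 0 < l) (hx : x ^ 2 ^ (k + 1) = 1)
    (hy : y ^ q = 1) (hxy : x * y * x⁻¹ = y⁻¹) (hz : z ^ l = 1) (hzc : ∀ g, Commute z g)
    (hfaithful : ∀ i j n : ℕ, y ^ j * x ^ i * z ^ n = 1 → 2 ^ (k + 1) ∣ i ∧ q ∣ j ∧ l ∣ n) :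
    Function.Injective (dihRelsProdHom hx hy hxy hz hzc) := by
  refine (injective_iff_map_eq_one _).2 fun p hp => ?_
  obtain ⟨i, j, n, rfl⟩ := dihRelsProd_exists_eq_pow_mul_pow hq hl p
  rw [dihRelsProdHom_apply] at hp
  obtain ⟨⟨i, rfl⟩, ⟨j, rfl⟩, hn⟩ := hfaithful i j n hp
  simp [pow_mul, dihRels_of_zero_pow, dihRels_of_one_pow, (ZMod.natCast_eq_zero_iff n l).2 hn]

theorem range_dihRelsProdHom (hq : 0 < q) (hl : 0 < l) (hx : x ^ 2 ^ (k + 1) = 1)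
    (hy : y ^ q = 1) (hxy : x * y * x⁻¹ = y⁻¹) (hz : z ^ l = 1) (hzc : ∀ g, Commute z g) :
    (dihRelsProdHom hx hy hxy hz hzc).range = Subgroup.closure {x, y, z} := by
  apply le_antisymm
  · rintro _ ⟨p, rfl⟩
    obtain ⟨i, j, n, rfl⟩ := dihRelsProd_exists_eq_pow_mul_pow hq hl p
    rw [dihRelsProdHom_apply]
    refine mul_mem (mul_mem ?_ ?_) ?_ <;> refine pow_mem (Subgroup.subset_closure ?_) _ <;> simp
  · rw [Subgroup.closure_le]
    rintro _ (rfl | rfl | rfl)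
    · exact ⟨(PresentedGroup.of 0, 1), by simp [dihRelsProdHom, PresentedGroup.toGroup.of]⟩
    · exact ⟨(PresentedGroup.of 1, 1), by simp [dihRelsProdHom, PresentedGroup.toGroup.of]⟩
    · exact ⟨(1, Multiplicative.ofAdd 1), by
        simpa [dihRelsProdHom] using zmodPowHom_ofAdd_natCast _ hz 1⟩

theorem nonempty_closure_mulEquiv_dihRels_prod (hq : 0 < q) (hl : 0 < l)
    (hx : x ^ 2 ^ (k + 1) = 1) (hy : y ^ q = 1) (hxy : x * y * x⁻¹ = y⁻¹) (hz : z ^ l = 1)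
    (hzc : ∀ g, Commute z g)
    (hfaithful : ∀ i j n : ℕ, y ^ j * x ^ i * z ^ n = 1 → 2 ^ (k + 1) ∣ i ∧ q ∣ j ∧ l ∣ n) :
    Nonempty (Subgroup.closure {x, y, z} ≃*
      PresentedGroup (dihRels k q) × Multiplicative (ZMod l)) :=
  ⟨((MonoidHom.ofInjective (dihRelsProdHom_injective hq hl hx hy hxy hz hzc hfaithful)).trans
    (MulEquiv.subgroupCongr (range_dihRelsProdHom hq hl hx hy hxy hz hzc))).symm⟩

end dihRelsProdHom

section TwoByTwo

variable {K : Type*} [Field K]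

theorem diag_pow (a b : K) (n : ℕ) : !![a, 0; 0, b] ^ n = !![a ^ n, 0; 0, b ^ n] := by
  induction n with
  | zero => simp [one_fin_two]
  | succ n ih => rw [pow_succ, ih, mul_fin_two]; simp [pow_succ]

theorem antidiag_pow_of_even (c : K) {n : ℕ} (hn : Even n) :
    !![0, c; c, 0] ^ n = c ^ n • (1 : Matrix (Fin 2) (Fin 2) K) := by
  obtain ⟨n, rfl⟩ := hn
  have hsq : !![0, c; c, 0] * !![0, c; c, 0] = (c * c) • (1 : Matrix (Fin 2) (Fin 2) K) := by
    rw [mul_fin_two, one_fin_two, smul_of, smul_cons]; simp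
  rw [← two_mul, pow_mul, sq, hsq, smul_pow, one_pow, pow_mul, sq]

theorem antidiag_pow_of_odd (c : K) {n : ℕ} (hn : Odd n) :
    !![0, c; c, 0] ^ n = !![0, c ^ n; c ^ n, 0] := by
  obtain ⟨n, rfl⟩ := hn
  rw [pow_succ, antidiag_pow_of_even c (even_two_mul n), smul_mul, one_mul, smul_of, smul_cons]
  simp [pow_succ]

variable {c ω : K} {A B : GL (Fin 2) K}

theorem commute_pow_of_antidiag (hA : (A : Matrix (Fin 2) (Fin 2) K) = !![0, c; c, 0])
    {n : ℕ} (hn : Even n) (g : GL (Fin 2) K) : Commute (A ^ n) g := by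
  rw [← Commute.units_val_iff, Units.val_pow_eq_pow_val, hA, antidiag_pow_of_even c hn]
  exact (Commute.one_left _).smul_left _

theorem orderOf_eq_of_antidiag (hA : (A : Matrix (Fin 2) (Fin 2) K) = !![0, c; c, 0])
    {N : ℕ} (hc : IsPrimitiveRoot c N) (hN : Even N) : orderOf A = N := by
  refine Nat.dvd_antisymm (orderOf_dvd_of_pow_eq_one (Units.ext ?_)) ?_
  · rw [Units.val_pow_eq_pow_val, hA, antidiag_pow_of_even c hN, hc.pow_eq_one, one_smul,
      Units.val_one]
  · have hval := congrArg (fun g : GL (Fin 2) K => (g : Matrix (Fin 2) (Fin 2) K) 0 0)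
      (pow_orderOf_eq_one A)
    simp only [Units.val_pow_eq_pow_val, hA, Units.val_one] at hval
    rcases Nat.even_or_odd (orderOf A) with he | ho
    · rw [antidiag_pow_of_even c he] at hval
      exact hc.dvd_of_pow_eq_one _ (by simpa using hval)
    · rw [antidiag_pow_of_odd c ho] at hval
      simp at hval

theorem pow_eq_neg_one_of_antidiag (hA : (A : Matrix (Fin 2) (Fin 2) K) = !![0, c; c, 0])
    {n : ℕ} (hn : Even n) (hc : c ^ n = -1) : A ^ n = -1 := by
  ext : 1
  rw [Units.val_pow_eq_pow_val, hA, antidiag_pow_of_even c hn, hc, Units.val_neg, Units.val_one,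
    neg_one_smul]

theorem pow_eq_neg_one_of_diag (hB : (B : Matrix (Fin 2) (Fin 2) K) = !![ω, 0; 0, ω⁻¹])
    {n : ℕ} (hω : ω ^ n = -1) : B ^ n = -1 := by
  ext : 1
  rw [Units.val_pow_eq_pow_val, hB, diag_pow, inv_pow, hω, Units.val_neg, Units.val_one,
    ← neg_one_smul K (1 : Matrix (Fin 2) (Fin 2) K), one_fin_two, smul_of, smul_cons]
  simp

theorem conj_diag_of_antidiag (hA : (A : Matrix (Fin 2) (Fin 2) K) = !![0, c; c, 0])
    (hB : (B : Matrix (Fin 2) (Fin 2) K) = !![ω, 0; 0, ω⁻¹]) (hω : ω ≠ 0) :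
    A * B * A⁻¹ = B⁻¹ := by
  rw [mul_inv_eq_iff_eq_mul, eq_inv_mul_iff_mul_eq]
  ext : 1
  simp only [Units.val_mul, hA, hB, mul_fin_two]
  ext i j
  fin_cases i <;> fin_cases j <;> simp [hω, mul_left_comm ω, mul_left_comm ω⁻¹]

theorem dvd_of_diag_pow_mul_antidiag_pow_eq_one
    (hA : (A : Matrix (Fin 2) (Fin 2) K) = !![0, c; c, 0])
    (hB : (B : Matrix (Fin 2) (Fin 2) K) = !![ω, 0; 0, ω⁻¹])
    {q N : ℕ} (hω : IsPrimitiveRoot ω q) (hq : Odd q) (hc : IsPrimitiveRoot c N) {j n : ℕ}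
    (h : B ^ j * A ^ n = 1) : q ∣ j ∧ N ∣ n := by
  have hval := congrArg (fun g : GL (Fin 2) K => (g : Matrix (Fin 2) (Fin 2) K)) h
  simp only [Units.val_mul, Units.val_pow_eq_pow_val, hA, hB, diag_pow, Units.val_one] at hval
  rcases Nat.even_or_odd n with he | ho
  · rw [antidiag_pow_of_even c he, mul_smul_comm, mul_one] at hval
    have h00 : c ^ n * ω ^ j = 1 := by simpa using congrFun (congrFun hval 0) 0
    have h11 : c ^ n * (ω ^ j)⁻¹ = 1 := by simpa using congrFun (congrFun hval 1) 1
    have hωj : ω ^ j = (ω ^ j)⁻¹ :=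
      mul_left_cancel₀ (left_ne_zero_of_mul_eq_one h00) (h00.trans h11.symm)
    have hj : q ∣ j := by
      have h2j : ω ^ (2 * j) = 1 := by
        rw [mul_comm, pow_mul, sq]
        nth_rw 2 [hωj]
        exact mul_inv_cancel₀ (right_ne_zero_of_mul_eq_one h00)
      exact (Nat.Coprime.dvd_of_dvd_mul_left hq.coprime_two_right
        (hω.dvd_of_pow_eq_one _ h2j))
    refine ⟨hj, hc.dvd_of_pow_eq_one n ?_⟩
    rwa [(hω.pow_eq_one_iff_dvd j).2 hj, mul_one] at h00
  · rw [antidiag_pow_of_odd c ho] at hval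
    simpa using congrFun (congrFun hval 0) 0

end TwoByTwo

theorem dvd_and_dvd_of_mul_dvd_crt_combination {P l α β i n : ℕ}
    (hα : α ≡ 1 [MOD P] ∧ α ≡ 0 [MOD l]) (hβ : β ≡ 0 [MOD P] ∧ β ≡ 1 [MOD l])
    (h : P * l ∣ α * i + β * n) : P ∣ i ∧ l ∣ n := by
  have hP : α * i + β * n ≡ i [MOD P] := by simpa using (hα.1.mul_right i).add (hβ.1.mul_right n)
  have hl : α * i + β * n ≡ n [MOD l] := by simpa using (hα.2.mul_right i).add (hβ.2.mul_right n)
  exact ⟨(hP.dvd_iff dvd_rfl).1 (dvd_of_mul_right_dvd h),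
    (hl.dvd_iff dvd_rfl).1 (dvd_of_mul_left_dvd h)⟩

theorem pow_mul_pow_eq_self_of_crt {G : Type*} [LeftCancelMonoid G] {a : G} {P l α β : ℕ}
    (hPl : Nat.Coprime P l) (ha : orderOf a = P * l) (hα : α ≡ 1 [MOD P] ∧ α ≡ 0 [MOD l])
    (hβ : β ≡ 0 [MOD P] ∧ β ≡ 1 [MOD l]) : a ^ α * a ^ β = a := by
  rw [← pow_add]
  conv_rhs => rw [← pow_one a]
  rw [pow_eq_pow_iff_modEq, ha]
  exact (Nat.modEq_and_modEq_iff_modEq_mul hPl).1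
    ⟨by simpa using hα.1.add hβ.1, by simpa using hα.2.add hβ.2⟩

theorem closure_pair_eq_closure_pow_sq_pow {G : Type*} [Group G] {a b : G} {α β s e : ℕ}
    (ha : a ^ α * a ^ β = a) (hb : (b ^ 2) ^ s * a ^ e = b) :
    Subgroup.closure {b, a} = Subgroup.closure {a ^ α, b ^ 2, a ^ β} := by
  set S : Set G := {a ^ α, b ^ 2, a ^ β} with hS
  apply le_antisymm <;> rw [Subgroup.closure_le]
  · have ha_mem : a ∈ Subgroup.closure S := by
      have := mul_mem (Subgroup.subset_closure (show a ^ α ∈ S by simp [hS]))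
        (Subgroup.subset_closure (show a ^ β ∈ S by simp [hS]))
      rwa [ha] at this
    have hb_mem : b ∈ Subgroup.closure S := by
      have := mul_mem (pow_mem (Subgroup.subset_closure (show b ^ 2 ∈ S by simp [hS])) s)
        (pow_mem ha_mem e)
      rwa [hb] at this
    exact Set.insert_subset_iff.2 ⟨hb_mem, Set.singleton_subset_iff.2 ha_mem⟩
  · rintro _ (rfl | rfl | rfl) <;> exact pow_mem (Subgroup.subset_closure (by simp)) _

theorem nonempty_closure_diag_antidiag_mulEquiv {k q l : ℕ} (hk : k ≠ 0) (hq : Odd q)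
    (hl : 0 < l) (hPl : Nat.Coprime (2 ^ (k + 1)) l) {ω c : ℂ} (hω : IsPrimitiveRoot ω (2 * q))
    (hc : IsPrimitiveRoot c (2 ^ (k + 1) * l)) {A B : GL (Fin 2) ℂ}
    (hB : (B : Matrix (Fin 2) (Fin 2) ℂ) = !![ω, 0; 0, ω⁻¹])
    (hA : (A : Matrix (Fin 2) (Fin 2) ℂ) = !![0, c; c, 0]) :
    Nonempty (Subgroup.closure {B, A} ≃*
      PresentedGroup (dihRels k q) × Multiplicative (ZMod l)) := by
  obtain ⟨r, rfl⟩ := hq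
  obtain ⟨α, hα⟩ := Nat.chineseRemainder hPl 1 0
  obtain ⟨β, hβ⟩ := Nat.chineseRemainder hPl 0 1
  have h2P : 2 ∣ 2 ^ (k + 1) := dvd_pow_self 2 k.succ_ne_zero
  have hα_odd : Odd α := Nat.odd_iff.2 (hα.1.of_dvd h2P)
  have hβ_even : Even β := Nat.even_iff.2 (hβ.1.of_dvd h2P)
  have hAord : orderOf A = 2 ^ (k + 1) * l :=
    orderOf_eq_of_antidiag hA hc ((Nat.even_pow.2 ⟨even_two, k.succ_ne_zero⟩).mul_right l)
  have hω2 : IsPrimitiveRoot (ω ^ 2) (2 * r + 1) := hω.pow (by omega) rfl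
  have hB2 : ((B ^ 2 : GL (Fin 2) ℂ) : Matrix (Fin 2) (Fin 2) ℂ) = !![ω ^ 2, 0; 0, (ω ^ 2)⁻¹] := by
    rw [Units.val_pow_eq_pow_val, hB, diag_pow, inv_pow]
  have hAα : ((A ^ α : GL (Fin 2) ℂ) : Matrix (Fin 2) (Fin 2) ℂ) = !![0, c ^ α; c ^ α, 0] := by
    rw [Units.val_pow_eq_pow_val, hA, antidiag_pow_of_odd c hα_odd]
  have hBq : B ^ (2 * r + 1) = -1 :=
    pow_eq_neg_one_of_diag hB (hω.pow (by omega) (mul_comm _ _)).eq_neg_one_of_two_right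
  have hB_eq : (B ^ 2) ^ (r + 1) * A ^ (2 ^ k * l) = B := by
    have hAN : A ^ (2 ^ k * l) = -1 :=
      pow_eq_neg_one_of_antidiag hA ((Nat.even_pow.2 ⟨even_two, hk⟩).mul_right l)
        (hc.pow (by positivity) (by ring)).eq_neg_one_of_two_right
    rw [← pow_mul, hAN, mul_neg_one, show 2 * (r + 1) = 2 * r + 1 + 1 by ring, pow_succ, hBq,
      neg_one_mul, neg_neg]
  rw [closure_pair_eq_closure_pow_sq_pow (pow_mul_pow_eq_self_of_crt hPl hAord hα hβ) hB_eq]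
  refine nonempty_closure_mulEquiv_dihRels_prod (by omega) hl ?_ ?_
    (conj_diag_of_antidiag hAα hB2 (pow_ne_zero 2 (hω.ne_zero (by omega)))) ?_
    (commute_pow_of_antidiag hA hβ_even) fun i j n h => ?_
  · rw [← pow_mul, ← orderOf_dvd_iff_pow_eq_one, hAord, mul_comm α]
    exact mul_dvd_mul_left _ (Nat.modEq_zero_iff_dvd.1 hα.2)
  · rw [← pow_mul, mul_comm, pow_mul, hBq, neg_one_sq]
  · rw [← pow_mul, ← orderOf_dvd_iff_pow_eq_one, hAord]
    exact mul_dvd_mul_right (Nat.modEq_zero_iff_dvd.1 hβ.1) _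
  · rw [mul_assoc, ← pow_mul A, ← pow_mul A, ← pow_add] at h
    obtain ⟨hj, hN⟩ :=
      dvd_of_diag_pow_mul_antidiag_pow_eq_one hA hB2 hω2 (odd_two_mul_add_one r) hc h
    obtain ⟨hi, hn⟩ := dvd_and_dvd_of_mul_dvd_crt_combination hα hβ hN
    exact ⟨hi, hj, hn⟩

theorem isPrimitiveRoot_zeta {n : ℕ} (hn : n ≠ 0) : IsPrimitiveRoot (zeta n) n :=
  Complex.isPrimitiveRoot_exp n hn

theorem zeta_four_mul_pow_self {m : ℕ} (hm : m ≠ 0) : zeta (4 * m) ^ m = Complex.I := by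
  have harg : (m : ℂ) * (2 * Real.pi * Complex.I / ((4 * m : ℕ) : ℂ)) =
      Real.pi / 2 * Complex.I := by
    push_cast
    field_simp
    norm_num
  rw [zeta, ← Complex.exp_nat_mul, harg, Complex.exp_pi_div_two_mul_I]

theorem isPrimitiveRoot_I_mul_zeta {m : ℕ} (hm : Even m) (hm0 : m ≠ 0) :
    IsPrimitiveRoot (Complex.I * zeta (4 * m)) (4 * m) := by
  rw [← zeta_four_mul_pow_self hm0, ← pow_succ]
  refine (isPrimitiveRoot_zeta (by omega)).pow_of_coprime _ (Nat.Coprime.mul_right ?_ ?_)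
  · exact Nat.Coprime.pow_right 2 (Nat.coprime_two_right.2 hm.add_one)
  · simp

theorem stmt3_general (k q l : ℕ) (hk : 2 ≤ k) (hq : Odd q) (hl : Odd l)
    (hgcd : Nat.gcd (2 ^ (k + 1) * q) l = 1)
    (m : ℕ) (hm : m = 2 ^ (k - 1) * l)
    (ψ τφ : GL (Fin 2) ℂ)
    (hψ : (ψ : Matrix (Fin 2) (Fin 2) ℂ) = !![zeta (2 * q), 0; 0, (zeta (2 * q))⁻¹])
    (hτφ : (τφ : Matrix (Fin 2) (Fin 2) ℂ) =
      !![0, Complex.I; Complex.I, 0] * !![zeta (4 * m), 0; 0, zeta (4 * m)]) :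
    Nonempty ((Subgroup.closure {ψ, τφ} : Subgroup (GL (Fin 2) ℂ)) ≃*
      PresentedGroup (dihRels k q) × Multiplicative (ZMod l)) := by
  obtain ⟨k, rfl⟩ : ∃ k', k = k' + 2 := ⟨k - 2, by omega⟩
  rw [show k + 2 - 1 = k + 1 by omega] at hm
  have hm4 : 4 * m = 2 ^ (k + 2 + 1) * l := by rw [hm]; ring
  have hm_even : Even m := by rw [hm]; exact (Nat.even_pow.2 ⟨even_two, by omega⟩).mul_right l
  have hm0 : m ≠ 0 := by rw [hm]; exact mul_ne_zero (by positivity) hl.pos.ne'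
  have hτφ' : (τφ : Matrix (Fin 2) (Fin 2) ℂ) =
      !![0, Complex.I * zeta (4 * m); Complex.I * zeta (4 * m), 0] := by
    rw [hτφ, mul_fin_two]; simp
  refine nonempty_closure_diag_antidiag_mulEquiv (by omega) hq hl.pos
    (Nat.Coprime.coprime_dvd_left (dvd_mul_right _ q) hgcd)
    (isPrimitiveRoot_zeta (by have := hq.pos; omega)) ?_ hψ hτφ'
  rw [← hm4]
  exact isPrimitiveRoot_I_mul_zeta hm_even hm0

theorem stmt3 (k q l : ℕ) (hk : 2 ≤ k) (hq : Odd q) (hq1 : 0 < q) (hl : Odd l)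
    (hgcd : Nat.gcd (2 ^ (k + 1) * q) l = 1)
    (m : ℕ) (hm : m = 2 ^ (k - 1) * l)
    (ψ τφ : GL (Fin 2) ℂ)
    (hψ : (ψ : Matrix (Fin 2) (Fin 2) ℂ) = !![zeta (2 * q), 0; 0, (zeta (2 * q))⁻¹])
    (hτφ : (τφ : Matrix (Fin 2) (Fin 2) ℂ) =
      !![0, Complex.I; Complex.I, 0] * !![zeta (4 * m), 0; 0, zeta (4 * m)]) :
    Nonempty ((Subgroup.closure {ψ, τφ} : Subgroup (GL (Fin 2) ℂ)) ≃*
      PresentedGroup (dihRels k q) × Multiplicative (ZMod l)) :=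
  stmt3_general k q l hk hq hl hgcd m hm ψ τφ hψ hτφ
end
end

section
/- The group P'_{8·3^k} has exactly 7·3^{k−1} irreducible complex representations: 3^k one-dimensional, 3^k two-dimensional, and 3^{k−1} three-dimensional, and the sum of squares of dimensions 3^k + 4·3^k + 9·3^{k−1} equals the order 8·3^k. -/
/-- Relators of P'_{8·3^k} = ⟨x,y,z | x² = (xy)² = y², zxz⁻¹ = y, zyz⁻¹ = xy, z^{3^k} = 1⟩. -/
def ppRels (k : ℕ) : Set (FreeGroup (Fin 3)) :=
  {FreeGroup.of 0 ^ 2 * ((FreeGroup.of 0 * FreeGroup.of 1) ^ 2)⁻¹,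
   (FreeGroup.of 0 * FreeGroup.of 1) ^ 2 * (FreeGroup.of 1 ^ 2)⁻¹,
   FreeGroup.of 2 * FreeGroup.of 0 * (FreeGroup.of 2)⁻¹ * (FreeGroup.of 1)⁻¹,
   FreeGroup.of 2 * FreeGroup.of 1 * (FreeGroup.of 2)⁻¹ * (FreeGroup.of 0 * FreeGroup.of 1)⁻¹,
   FreeGroup.of 2 ^ 3 ^ k}

/-!
The relations `x² = (xy)² = y²` make `⟨x, y⟩` a quotient of `Q₈`, on which `z` acts by the
order-three automorphism `x ↦ y ↦ xy`; comparing presentations gives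
`P'_{8·3^k} ≅ Q₈ ⋊ C_{3^k}`, where `C_{3^k}` acts through its quotient `C₃`.

When an abelian group `G` acts through a surjection `π : G → H`, the classes of `N ⋊ G` lying
over `g` correspond to the classes of `N ⋊ H` lying over `π g`, so
`#classes(N ⋊ G) = |ker π| · #classes(N ⋊ H)`. Here `Q₈ ⋊ C₃ ≅ SL(2, 3)` has `7` classes (a
finite computation) and `|ker π| = 3^{k-1}`.

A character `χ` of `P'` has `χ x = χ y` from `zxz⁻¹ = y` and then `χ x = 1` from `zyz⁻¹ = xy`,
so it is determined by the `3^k`-th root of unity `χ z`.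
-/

open Finset in
lemma MonoidHom.sum_comp_of_surjective {G H M : Type*} [Group G] [Group H] [Fintype G] [Fintype H]
    [AddCommMonoid M] {π : G →* H} (hπ : Function.Surjective π) (F : H → M) :
    ∑ g, F (π g) = Nat.card π.ker • ∑ h, F h := by
  classical
  have hfiber (h : H) : #{g | π g = h} = Nat.card π.ker := by
    rw [card_fiber_eq_of_mem_range π (hπ h) ⟨1, map_one π⟩, Nat.card_eq_fintype_card,
      Fintype.card_subtype]
    simp only [MonoidHom.mem_ker]
  rw [sum_comp, image_univ_of_surjective hπ, smul_sum]
  exact sum_congr rfl fun h _ => by rw [hfiber]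

lemma MonoidHom.card_ker_mul_card_of_surjective {G H : Type*} [Group G] [Group H] {π : G →* H}
    (hπ : Function.Surjective π) : Nat.card π.ker * Nat.card H = Nat.card G := by
  rw [← π.ker.card_mul_index, Subgroup.index_ker, π.range_eq_top_of_surjective hπ,
    Subgroup.card_top]

lemma ConjClasses.card_eq_card_range {α β : Type*} [Monoid α] (f : α → β)
    (hf : ∀ x y, IsConj x y ↔ f x = f y) : Nat.card (ConjClasses α) = Nat.card (Set.range f) :=
  Nat.card_congr ((Quotient.congrRight hf).trans (Setoid.quotientKerEquivRange f))

lemma MulEquiv.card_conjClasses_eq {G H : Type*} [Group G] [Group H] (e : G ≃* H) :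
    Nat.card (ConjClasses G) = Nat.card (ConjClasses H) :=
  Nat.card_congr <| Quotient.congr e.toEquiv fun a b =>
    show IsConj a b ↔ IsConj (e a) (e b) from ⟨e.toMonoidHom.map_isConj, fun h => by
      simpa only [MulEquiv.coe_toMonoidHom, MulEquiv.symm_apply_apply] using
        e.symm.toMonoidHom.map_isConj h⟩

lemma MonoidHom.map_mulAut_pow_apply {M N : Type*} [Monoid M] [Monoid N] (f : M →* N)
    {α : MulAut M} {β : MulAut N} (h : ∀ q, f (α q) = β (f q)) (m : ℕ) (q : M) :
    f ((α ^ m) q) = (β ^ m) (f q) := by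
  induction m generalizing q with
  | zero => rfl
  | succ m ih => rw [pow_succ', pow_succ', MulAut.mul_apply, MulAut.mul_apply, h, ih]

namespace SemidirectProduct

section

variable {N G : Type*} [Group N] [Group G] {φ : G →* MulAut N}

instance [DecidableEq N] [DecidableEq G] : DecidableEq (N ⋊[φ] G) :=
  fun _ _ => decidable_of_iff _ SemidirectProduct.ext_iff.symm

instance [Fintype N] [Fintype G] : Fintype (N ⋊[φ] G) :=
  Fintype.ofEquiv _ equivProd.symm

end

variable {N G H : Type*} [Group N] [CommGroup G] [CommGroup H]

lemma conj_left {φ : G →* MulAut N} (a x : N ⋊[φ] G) :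
    (a * x * a⁻¹).left = a.left * φ a.right x.left * (φ x.right a.left)⁻¹ := by
  simp only [mul_left, inv_left, mul_right, map_inv, map_mul, mul_comm a.right x.right]
  simp

lemma conj_right {φ : G →* MulAut N} (a x : N ⋊[φ] G) : (a * x * a⁻¹).right = x.right := by
  simp [mul_comm a.right]

lemma isConj_iff_exists {φ : G →* MulAut N} {x y : N ⋊[φ] G} :
    IsConj x y ↔
      x.right = y.right ∧ ∃ p : N, ∃ s : G, y.left = p * φ s x.left * (φ x.right p)⁻¹ := by
  rw [isConj_iff]
  constructor
  · rintro ⟨a, rfl⟩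
    exact ⟨(conj_right a x).symm, a.left, a.right, conj_left a x⟩
  · rintro ⟨hr, p, s, hl⟩
    refine ⟨⟨p, s⟩, ?_⟩
    ext
    · rw [conj_left, hl]
    · rw [conj_right, hr]

lemma isConj_iff_isConj_comp {ψ : H →* MulAut N} {π : G →* H} (hπ : Function.Surjective π)
    {x y : N ⋊[ψ.comp π] G} :
    IsConj x y ↔ x.right = y.right ∧
      IsConj (⟨x.left, π x.right⟩ : N ⋊[ψ] H) ⟨y.left, π y.right⟩ := by
  simp only [isConj_iff_exists, hπ.exists, MonoidHom.comp_apply]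
  constructor
  · rintro ⟨hr, h⟩
    exact ⟨hr, congrArg π hr, h⟩
  · rintro ⟨hr, -, h⟩
    exact ⟨hr, h⟩

def conjClassesOver (ψ : H →* MulAut N) (h : H) : Set (ConjClasses (N ⋊[ψ] H)) :=
  Set.range fun n : N => ConjClasses.mk ⟨n, h⟩

instance [Finite N] (ψ : H →* MulAut N) (h : H) : Finite (conjClassesOver ψ h) :=
  Set.finite_range _ |>.to_subtype

lemma card_conjClasses_comp_eq_sum [Finite N] [Fintype G] {ψ : H →* MulAut N} {π : G →* H}
    (hπ : Function.Surjective π) :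
    Nat.card (ConjClasses (N ⋊[ψ.comp π] G)) = ∑ g, Nat.card (conjClassesOver ψ (π g)) := by
  let f (x : N ⋊[ψ.comp π] G) : G × ConjClasses (N ⋊[ψ] H) :=
    (x.right, .mk ⟨x.left, π x.right⟩)
  have hf (x y : N ⋊[ψ.comp π] G) : IsConj x y ↔ f x = f y := by
    simp only [isConj_iff_isConj_comp hπ, f, Prod.ext_iff, ConjClasses.mk_eq_mk_iff_isConj]
  rw [ConjClasses.card_eq_card_range f hf, ← Nat.card_sigma]
  refine Nat.card_congr ((Equiv.subtypeEquivRight fun p => ?_).trans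
    (Equiv.subtypeProdEquivSigmaSubtype fun g c => c ∈ conjClassesOver ψ (π g)))
  constructor
  · rintro ⟨x, rfl⟩
    exact ⟨x.left, rfl⟩
  · rintro ⟨n, hn⟩
    exact ⟨⟨n, p.1⟩, Prod.ext rfl hn⟩

lemma card_conjClasses_comp [Finite N] [Fintype G] [Fintype H] {ψ : H →* MulAut N}
    {π : G →* H} (hπ : Function.Surjective π) :
    Nat.card (ConjClasses (N ⋊[ψ.comp π] G)) =
      Nat.card π.ker * Nat.card (ConjClasses (N ⋊[ψ] H)) := by
  have hH := card_conjClasses_comp_eq_sum (ψ := ψ) (π := MonoidHom.id H) Function.surjective_id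
  rw [MonoidHom.comp_id] at hH
  simp only [MonoidHom.id_apply] at hH
  rw [card_conjClasses_comp_eq_sum hπ,
    π.sum_comp_of_surjective hπ fun h => Nat.card (conjClassesOver ψ h), hH, smul_eq_mul]

end SemidirectProduct

namespace ZMod

variable {n : ℕ} [NeZero n] {G : Type*}

def powHom [Monoid G] (g : G) (hg : g ^ n = 1) : Multiplicative (ZMod n) →* G where
  toFun i := g ^ i.toAdd.val
  map_one' := by simp
  map_mul' i j := by rw [toAdd_mul, val_add, ← pow_eq_pow_mod _ hg, pow_add]

@[simp]
lemma powHom_apply [Monoid G] (g : G) (hg : g ^ n = 1) (i : Multiplicative (ZMod n)) :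
    powHom g hg i = g ^ i.toAdd.val := rfl

lemma powHom_ofAdd_natCast [Monoid G] (g : G) (hg : g ^ n = 1) (m : ℕ) :
    powHom g hg (.ofAdd (m : ZMod n)) = g ^ m := by
  rw [powHom_apply, toAdd_ofAdd, val_natCast, ← pow_eq_pow_mod _ hg]

lemma powHom_ofAdd_one [Monoid G] (g : G) (hg : g ^ n = 1) : powHom g hg (.ofAdd 1) = g := by
  simpa using powHom_ofAdd_natCast g hg 1

lemma conj_powHom [Group G] {x y : G} (hx : x ^ n = 1) (hyx : y * x * y⁻¹ = x⁻¹)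
    (i : Multiplicative (ZMod n)) : y * powHom x hx i * y⁻¹ = powHom x hx i⁻¹ := by
  rw [map_inv, powHom_apply, ← conj_pow, hyx, inv_pow]

lemma ofAdd_one_pow_val (i : Multiplicative (ZMod n)) :
    (Multiplicative.ofAdd (1 : ZMod n)) ^ i.toAdd.val = i := by
  rw [← ofAdd_nsmul, nsmul_one, natCast_zmod_val]
  rfl

lemma monoidHom_ext [Monoid G] {f g : Multiplicative (ZMod n) →* G}
    (h : f (.ofAdd 1) = g (.ofAdd 1)) : f = g := by
  refine MonoidHom.ext fun i => ?_
  rw [← ofAdd_one_pow_val i, map_pow, map_pow, h]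

end ZMod

section QuaternionRelations

variable {G : Type*} [Group G] {x y : G}

lemma conj_eq_inv_of_sq_eq_mul_sq (h₁ : x ^ 2 = (x * y) ^ 2) (h₂ : (x * y) ^ 2 = y ^ 2) :
    y * x * y⁻¹ = x⁻¹ := by
  have hx : x = y * x * y := mul_left_cancel (a := x) (by simpa [sq, mul_assoc] using h₁)
  calc y * x * y⁻¹ = (y * x * y) * (y ^ 2)⁻¹ := by group
    _ = x⁻¹ := by rw [← hx, ← h₂, ← h₁]; group

lemma pow_four_eq_one_of_sq_eq_mul_sq (h₁ : x ^ 2 = (x * y) ^ 2) (h₂ : (x * y) ^ 2 = y ^ 2) :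
    x ^ 4 = 1 := by
  have hsq : (x ^ 2)⁻¹ = x ^ 2 :=
    calc (x ^ 2)⁻¹ = (y * x * y⁻¹) ^ 2 := by rw [conj_eq_inv_of_sq_eq_mul_sq h₁ h₂, inv_pow]
      _ = y * y ^ 2 * y⁻¹ := by rw [conj_pow, h₁, h₂]
      _ = x ^ 2 := by rw [h₁, h₂]; group
  calc x ^ 4 = x ^ 2 * (x ^ 2)⁻¹ := by rw [hsq]; group
    _ = 1 := mul_inv_cancel _

end QuaternionRelations

namespace QuaternionGroup

variable {n : ℕ} [NeZero n] {G : Type*} [Group G]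

def lift (x y : G) (hx : x ^ (2 * n) = 1) (hy : y ^ 2 = x ^ n) (hyx : y * x * y⁻¹ = x⁻¹) :
    QuaternionGroup n →* G where
  toFun
    | a i => ZMod.powHom x hx (.ofAdd i)
    | xa i => y * ZMod.powHom x hx (.ofAdd i)
  map_one' := map_one _
  map_mul' := by
    have y_mul (i : ZMod (2 * n)) :
        y * ZMod.powHom x hx (.ofAdd i) = ZMod.powHom x hx (.ofAdd (-i)) * y := by
      rw [← mul_inv_eq_iff_eq_mul, ZMod.conj_powHom hx hyx]
      rfl
    rintro (i | i) (j | j)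
    · exact map_mul _ (Multiplicative.ofAdd i) (Multiplicative.ofAdd j)
    · show y * ZMod.powHom x hx (.ofAdd (j - i)) =
        ZMod.powHom x hx (.ofAdd i) * (y * ZMod.powHom x hx (.ofAdd j))
      rw [sub_eq_neg_add, ofAdd_add, map_mul, ← mul_assoc, y_mul, neg_neg, mul_assoc]
    · show y * ZMod.powHom x hx (.ofAdd (i + j)) =
        y * ZMod.powHom x hx (.ofAdd i) * ZMod.powHom x hx (.ofAdd j)
      rw [ofAdd_add, map_mul, mul_assoc]
    · show ZMod.powHom x hx (.ofAdd (n + j - i)) =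
        y * ZMod.powHom x hx (.ofAdd i) * (y * ZMod.powHom x hx (.ofAdd j))
      rw [show (n : ZMod (2 * n)) + j - i = -i + n + j by ring, ofAdd_add, ofAdd_add, map_mul,
        map_mul, ZMod.powHom_ofAdd_natCast, ← hy, y_mul, sq]
      simp only [mul_assoc]

lemma hom_ext {M : Type*} [Monoid M] {f g : QuaternionGroup n →* M}
    (ha : f (a 1) = g (a 1)) (hxa : f (xa 0) = g (xa 0)) : f = g := by
  have ha' (i : ZMod (2 * n)) : f (a i) = g (a i) := by
    rw [← ZMod.natCast_zmod_val i, ← a_one_pow, map_pow, map_pow, ha]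
  refine MonoidHom.ext fun q => ?_
  rcases q with i | i
  · exact ha' i
  · rw [← zero_add i, ← xa_mul_a, map_mul, map_mul, hxa, ha']

end QuaternionGroup

open QuaternionGroup

abbrev Q8 := QuaternionGroup 2

-- the automorphism `i ↦ j ↦ k ↦ i` with `i = a 1`, `j = xa 0`, `k = xa 3`
def cycleAutFun : Q8 → Q8
  | a i => if i = 1 then xa 0 else if i = 3 then xa 2 else a i
  | xa i => if i = 0 then xa 3 else if i = 1 then a 3 else if i = 2 then xa 1 else a 1

def cycleAut : MulAut Q8 where
  toFun := cycleAutFun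
  invFun := cycleAutFun ∘ cycleAutFun
  left_inv := by decide
  right_inv := by decide
  map_mul' := by decide

lemma cycleAut_pow_three : cycleAut ^ 3 = 1 := MulEquiv.ext (by decide)

def cycleAction : Multiplicative (ZMod 3) →* MulAut Q8 := ZMod.powHom cycleAut cycleAut_pow_three

-- `Q₈ ⋊ C₃ ≅ SL(2, 3)`
lemma card_conjClasses_binaryTetrahedral :
    Nat.card (ConjClasses (Q8 ⋊[cycleAction] Multiplicative (ZMod 3))) = 7 := by
  rw [Nat.card_eq_fintype_card]
  decide

section

variable {n : ℕ}

def cycleActionOfDvd (h : 3 ∣ n) : Multiplicative (ZMod n) →* MulAut Q8 :=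
  cycleAction.comp (ZMod.castHom h (ZMod 3)).toAddMonoidHom.toMultiplicative

lemma cycleActionOfDvd_ofAdd_one (h : 3 ∣ n) : cycleActionOfDvd h (.ofAdd 1) = cycleAut := by
  have h1 : (ZMod.castHom h (ZMod 3)).toAddMonoidHom.toMultiplicative (.ofAdd 1) = .ofAdd 1 :=
    congrArg Multiplicative.ofAdd (map_one (ZMod.castHom h (ZMod 3)))
  rw [cycleActionOfDvd, MonoidHom.comp_apply, h1]
  exact ZMod.powHom_ofAdd_one _ _

lemma cycleActionOfDvd_apply [NeZero n] (h : 3 ∣ n) (t : Multiplicative (ZMod n)) :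
    cycleActionOfDvd h t = cycleAut ^ t.toAdd.val := by
  conv_lhs => rw [← ZMod.ofAdd_one_pow_val t, map_pow, cycleActionOfDvd_ofAdd_one]

lemma card_conjClasses_cycleActionOfDvd [NeZero n] (h : 3 ∣ n) :
    Nat.card (ConjClasses (Q8 ⋊[cycleActionOfDvd h] Multiplicative (ZMod n))) = 7 * (n / 3) := by
  have hπ : Function.Surjective (ZMod.castHom h (ZMod 3)).toAddMonoidHom.toMultiplicative :=
    ZMod.castHom_surjective h
  have hker := MonoidHom.card_ker_mul_card_of_surjective hπ
  rw [cycleActionOfDvd, SemidirectProduct.card_conjClasses_comp hπ,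
    card_conjClasses_binaryTetrahedral]
  simp only [Nat.card_eq_fintype_card, Fintype.card_multiplicative, ZMod.card] at hker ⊢
  omega

end

namespace PPrime

variable {k : ℕ}

def x : PresentedGroup (ppRels k) := .of 0
def y : PresentedGroup (ppRels k) := .of 1
def z : PresentedGroup (ppRels k) := .of 2

lemma x_sq_eq : (x ^ 2 : PresentedGroup (ppRels k)) = (x * y) ^ 2 := by
  have h := PresentedGroup.mk_eq_mk_of_mul_inv_mem (rels := ppRels k)
    (x := .of 0 ^ 2) (y := (.of 0 * .of 1) ^ 2) (by simp [ppRels])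
  simp only [map_pow, map_mul] at h
  exact h

lemma mul_sq_eq : ((x * y) ^ 2 : PresentedGroup (ppRels k)) = y ^ 2 := by
  have h := PresentedGroup.mk_eq_mk_of_mul_inv_mem (rels := ppRels k)
    (x := (.of 0 * .of 1) ^ 2) (y := .of 1 ^ 2) (by simp [ppRels])
  simp only [map_pow, map_mul] at h
  exact h

lemma z_conj_x : (z * x * z⁻¹ : PresentedGroup (ppRels k)) = y := by
  have h := PresentedGroup.mk_eq_mk_of_mul_inv_mem (rels := ppRels k)
    (x := .of 2 * .of 0 * (.of 2)⁻¹) (y := .of 1) (by simp [ppRels])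
  simp only [map_inv, map_mul] at h
  exact h

lemma z_conj_y : (z * y * z⁻¹ : PresentedGroup (ppRels k)) = x * y := by
  have h := PresentedGroup.mk_eq_mk_of_mul_inv_mem (rels := ppRels k)
    (x := .of 2 * .of 1 * (.of 2)⁻¹) (y := .of 0 * .of 1) (by simp [ppRels])
  simp only [map_inv, map_mul] at h
  exact h

lemma z_pow : (z ^ 3 ^ k : PresentedGroup (ppRels k)) = 1 := by
  have h := PresentedGroup.one_of_mem (rels := ppRels k) (x := .of 2 ^ 3 ^ k) (by simp [ppRels])
  simp only [map_pow] at h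
  exact h

lemma y_conj_x : (y * x * y⁻¹ : PresentedGroup (ppRels k)) = x⁻¹ :=
  conj_eq_inv_of_sq_eq_mul_sq x_sq_eq mul_sq_eq

lemma x_pow_four : (x ^ (2 * 2) : PresentedGroup (ppRels k)) = 1 :=
  pow_four_eq_one_of_sq_eq_mul_sq x_sq_eq mul_sq_eq

lemma y_sq : (y ^ 2 : PresentedGroup (ppRels k)) = x ^ 2 := (x_sq_eq.trans mul_sq_eq).symm

lemma x_mul_y : (x * y : PresentedGroup (ppRels k)) = y * x ^ 3 := by
  have hx : (x⁻¹ : PresentedGroup (ppRels k)) = x ^ 3 :=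
    inv_eq_of_mul_eq_one_right (by rw [← pow_succ', x_pow_four])
  calc x * y = (y * x * y⁻¹)⁻¹ * y := by rw [y_conj_x, inv_inv]
    _ = y * x⁻¹ := by group
    _ = y * x ^ 3 := by rw [hx]

variable (k) in
def quaternionHom : Q8 →* PresentedGroup (ppRels k) :=
  QuaternionGroup.lift x y x_pow_four y_sq y_conj_x

lemma quaternionHom_a_one : quaternionHom k (a 1) = x := pow_one x

lemma quaternionHom_xa_zero : quaternionHom k (xa 0) = y := mul_one y

lemma quaternionHom_cycleAut (q : Q8) :
    quaternionHom k (cycleAut q) = MulAut.conj z (quaternionHom k q) := by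
  suffices (quaternionHom k).comp cycleAut.toMonoidHom =
      (MulAut.conj z).toMonoidHom.comp (quaternionHom k) from DFunLike.congr_fun this q
  refine QuaternionGroup.hom_ext ?_ ?_
  · show quaternionHom k (xa 0) = z * quaternionHom k (a 1) * z⁻¹
    rw [quaternionHom_a_one, quaternionHom_xa_zero, z_conj_x]
  · show y * x ^ 3 = z * quaternionHom k (xa 0) * z⁻¹
    rw [quaternionHom_xa_zero, z_conj_y, x_mul_y]

section Semidirect

variable (h : 3 ∣ 3 ^ k)

def ofSemidirect :
    Q8 ⋊[cycleActionOfDvd h] Multiplicative (ZMod (3 ^ k)) →* PresentedGroup (ppRels k) :=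
  SemidirectProduct.lift (quaternionHom k) (ZMod.powHom z z_pow) fun t => MonoidHom.ext fun q => by
    simp only [MonoidHom.comp_apply, MulEquiv.coe_toMonoidHom, cycleActionOfDvd_apply,
      (quaternionHom k).map_mulAut_pow_apply quaternionHom_cycleAut, ZMod.powHom_apply, map_pow]

def semidirectGens : Fin 3 → Q8 ⋊[cycleActionOfDvd h] Multiplicative (ZMod (3 ^ k)) :=
  ![.inl (a 1), .inl (xa 0), .inr (.ofAdd 1)]

open SemidirectProduct in
lemma semidirectGens_rels : ∀ r ∈ ppRels k, FreeGroup.lift (semidirectGens h) r = 1 := by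
  intro r hr
  simp only [ppRels, Set.mem_insert_iff, Set.mem_singleton_iff] at hr
  rcases hr with rfl | rfl | rfl | rfl | rfl <;>
    simp only [semidirectGens, map_mul, map_pow, map_inv, mul_inv_rev, FreeGroup.lift_apply_of,
      Matrix.cons_val, Matrix.cons_val_zero, Matrix.cons_val_one]
  · simp only [← map_pow, ← map_mul, ← map_inv, map_eq_one_iff _ inl_injective]
    decide
  · simp only [← map_pow, ← map_mul, ← map_inv, map_eq_one_iff _ inl_injective]
    decide
  · rw [← map_inv inr, ← inl_aut, cycleActionOfDvd_ofAdd_one, ← map_inv, ← map_mul,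
      map_eq_one_iff _ inl_injective]
    decide
  · rw [← map_inv inr, ← inl_aut, cycleActionOfDvd_ofAdd_one, ← map_inv, ← map_inv, ← map_mul,
      ← map_mul, map_eq_one_iff _ inl_injective]
    decide
  · rw [← map_pow, ← ofAdd_nsmul, nsmul_one, ZMod.natCast_self, ofAdd_zero, map_one]

def toSemidirect :
    PresentedGroup (ppRels k) →* Q8 ⋊[cycleActionOfDvd h] Multiplicative (ZMod (3 ^ k)) :=
  PresentedGroup.toGroup (semidirectGens_rels h)

lemma toSemidirect_x : toSemidirect h x = .inl (a 1) := PresentedGroup.toGroup.of _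

lemma toSemidirect_y : toSemidirect h y = .inl (xa 0) := PresentedGroup.toGroup.of _

lemma toSemidirect_z : toSemidirect h z = .inr (.ofAdd 1) := PresentedGroup.toGroup.of _

lemma ofSemidirect_inl (q : Q8) : ofSemidirect h (.inl q) = quaternionHom k q :=
  SemidirectProduct.lift_inl _ _ _ _

lemma ofSemidirect_inr (t : Multiplicative (ZMod (3 ^ k))) :
    ofSemidirect h (.inr t) = ZMod.powHom z z_pow t :=
  SemidirectProduct.lift_inr _ _ _ _

lemma ofSemidirect_comp_toSemidirect :
    (ofSemidirect h).comp (toSemidirect h) = MonoidHom.id _ := by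
  refine PresentedGroup.ext fun i => ?_
  fin_cases i
  · show ofSemidirect h (toSemidirect h x) = x
    rw [toSemidirect_x, ofSemidirect_inl, quaternionHom_a_one]
  · show ofSemidirect h (toSemidirect h y) = y
    rw [toSemidirect_y, ofSemidirect_inl, quaternionHom_xa_zero]
  · show ofSemidirect h (toSemidirect h z) = z
    rw [toSemidirect_z, ofSemidirect_inr, ZMod.powHom_ofAdd_one]

lemma toSemidirect_comp_ofSemidirect :
    (toSemidirect h).comp (ofSemidirect h) = MonoidHom.id _ := by
  refine SemidirectProduct.hom_ext (QuaternionGroup.hom_ext ?_ ?_) (ZMod.monoidHom_ext ?_)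
  · show toSemidirect h (ofSemidirect h (.inl (a 1))) = .inl (a 1)
    rw [ofSemidirect_inl, quaternionHom_a_one, toSemidirect_x]
  · show toSemidirect h (ofSemidirect h (.inl (xa 0))) = .inl (xa 0)
    rw [ofSemidirect_inl, quaternionHom_xa_zero, toSemidirect_y]
  · show toSemidirect h (ofSemidirect h (.inr (.ofAdd 1))) = .inr (.ofAdd 1)
    rw [ofSemidirect_inr, ZMod.powHom_ofAdd_one, toSemidirect_z]

def mulEquivSemidirect :
    PresentedGroup (ppRels k) ≃* Q8 ⋊[cycleActionOfDvd h] Multiplicative (ZMod (3 ^ k)) :=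
  MonoidHom.toMulEquiv (toSemidirect h) (ofSemidirect h) (ofSemidirect_comp_toSemidirect h)
    (toSemidirect_comp_ofSemidirect h)

end Semidirect

section Abelianization

variable {A : Type*} [CommGroup A] (ψ : PresentedGroup (ppRels k) →* A)

lemma map_y_eq_map_x : ψ y = ψ x := by simpa using (congrArg ψ z_conj_x).symm

lemma map_x_eq_one : ψ x = 1 := by
  simpa [map_y_eq_map_x] using congrArg ψ z_conj_y

end Abelianization

variable (k) in
def homEquiv (A : Type*) [CommGroup A] :
    (PresentedGroup (ppRels k) →* A) ≃ {a : A // a ^ 3 ^ k = 1} where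
  toFun ψ := ⟨ψ z, by rw [← map_pow, z_pow, map_one]⟩
  invFun a := PresentedGroup.toGroup (f := ![1, 1, a.1]) fun r hr => by
    simp only [ppRels, Set.mem_insert_iff, Set.mem_singleton_iff] at hr
    rcases hr with rfl | rfl | rfl | rfl | rfl <;> simp [a.2]
  left_inv ψ := by
    refine PresentedGroup.ext fun i => (PresentedGroup.toGroup.of _).trans ?_
    fin_cases i
    · exact (map_x_eq_one ψ).symm
    · exact ((map_y_eq_map_x ψ).trans (map_x_eq_one ψ)).symm
    · rfl
  right_inv a := Subtype.ext (PresentedGroup.toGroup.of _)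

lemma card_monoidHom_units_complex :
    Nat.card (PresentedGroup (ppRels k) →* ℂˣ) = 3 ^ k := by
  rw [Nat.card_congr (homEquiv k ℂˣ), Nat.card_congr (Equiv.subtypeEquivRight fun ω =>
    (mem_rootsOfUnity (3 ^ k) ω).symm), Complex.card_rootsOfUnity]

end PPrime

/-- The group P'_{8·3^k} has exactly 7·3^{k−1} irreducible complex representations
(the number of irreducibles equals the number of conjugacy classes): 3^k
one-dimensional (one-dimensional representations being exactly the homomorphisms to ℂˣ),
3^k two-dimensional and 3^{k−1} three-dimensional, and the sum of squares of the
dimensions equals the order 8·3^k. -/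
theorem stmt13 (k : ℕ) (hk : 2 ≤ k) :
    Nat.card (ConjClasses (PresentedGroup (ppRels k))) = 7 * 3 ^ (k - 1) ∧
    Nat.card (PresentedGroup (ppRels k) →* ℂˣ) = 3 ^ k ∧
    3 ^ k + 3 ^ k + 3 ^ (k - 1) = 7 * 3 ^ (k - 1) ∧
    3 ^ k + 4 * 3 ^ k + 9 * 3 ^ (k - 1) = 8 * 3 ^ k := by
  have h3 : 3 ∣ 3 ^ k := dvd_pow_self 3 (by omega)
  have hpow : 3 ^ k = 3 * 3 ^ (k - 1) := by rw [← pow_succ']; congr 1; omega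
  refine ⟨?_, PPrime.card_monoidHom_units_complex, by omega, by omega⟩
  rw [(PPrime.mulEquivSemidirect h3).card_conjClasses_eq, card_conjClasses_cycleActionOfDvd, hpow,
    Nat.mul_div_cancel_left _ three_pos]
end

section
/- Let q ≥ 2 and 1 ≤ t ≤ q−1, and let ζ = e^{2πi/(2q)}. Then (1/4q)·[ −Σ_{j=1}^{2q−1} (2 − ζ^{tj} − ζ^{−tj})/(2 − ζ^j − ζ^{−j}) − 2q ] = (t² − 2qt − 2q)/(4q). -/
/-!
Writing `z = ζ^j`, the quotient `(2 - z^t - z^{-t}) / (2 - z - z^{-1}) = |1 - z^t|² / |1 - z|²` is the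
Fejér-type product `(∑_{k<t} z^k)(∑_{l<t} z^{-l})`. Summed over all `n`-th roots of unity, orthogonality
kills the off-diagonal terms `k ≠ l` and leaves `t n`; removing the term `j = 0`, which equals `t²`,
gives `t (n - t)` for the sum over `1 ≤ j < n`. With `n = 2q` the stated identity is then arithmetic.
-/

noncomputable section

open Finset

section Field

variable {K : Type*} [Field K]

theorem two_sub_sub_inv_eq_mul {z : K} (hz : z ≠ 0) : 2 - z - z⁻¹ = (1 - z) * (1 - z⁻¹) := by
  field_simp
  ring

theorem two_sub_pow_div_two_sub_eq_geom_sum_mul {z : K} (hz0 : z ≠ 0) (hz1 : z ≠ 1) (t : ℕ) :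
    (2 - z ^ t - (z ^ t)⁻¹) / (2 - z - z⁻¹) =
      (∑ k ∈ range t, z ^ k) * ∑ l ∈ range t, z⁻¹ ^ l := by
  have hden : 2 - z - z⁻¹ ≠ 0 := by
    rw [two_sub_sub_inv_eq_mul hz0]
    exact mul_ne_zero (sub_ne_zero.mpr hz1.symm) (sub_ne_zero.mpr (inv_ne_one.mpr hz1).symm)
  rw [div_eq_iff hden, two_sub_sub_inv_eq_mul (pow_ne_zero t hz0), two_sub_sub_inv_eq_mul hz0,
    ← geom_sum_mul_neg, ← inv_pow, ← geom_sum_mul_neg]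
  ring

theorem geom_sum_eq_zero_of_pow_eq_one {w : K} {n : ℕ} (hw1 : w ≠ 1) (hwn : w ^ n = 1) :
    ∑ j ∈ range n, w ^ j = 0 := by
  rw [geom_sum_eq hw1, hwn, sub_self, zero_div]

namespace IsPrimitiveRoot

variable {ζ : K} {n : ℕ}

theorem sum_range_pow_mul_inv_pow (hζ : IsPrimitiveRoot ζ n) {k l : ℕ} (hk : k < n)
    (hl : l < n) :
    ∑ j ∈ range n, (ζ ^ j) ^ k * (ζ ^ j)⁻¹ ^ l = if k = l then (n : K) else 0 := by
  have hζ0 : ζ ≠ 0 := hζ.ne_zero (by omega)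
  have hterm (j : ℕ) : (ζ ^ j) ^ k * (ζ ^ j)⁻¹ ^ l = (ζ ^ k * ζ⁻¹ ^ l) ^ j := by
    ring
  simp_rw [hterm]
  split_ifs with hkl
  · subst hkl
    simp [hζ0]
  · apply geom_sum_eq_zero_of_pow_eq_one
    · rw [inv_pow, ← div_eq_mul_inv, Ne, div_eq_one_iff_eq (pow_ne_zero l hζ0)]
      exact fun h ↦ hkl (hζ.pow_inj hk hl h)
    · rw [← hterm n, hζ.pow_eq_one, inv_one, one_pow, one_pow, one_mul]

theorem sum_Ico_two_sub_pow_div_two_sub_eq (hζ : IsPrimitiveRoot ζ n) {t : ℕ} (ht : t ≤ n) :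
    ∑ j ∈ Ico 1 n, (2 - ζ ^ (t * j) - (ζ ^ (t * j))⁻¹) / (2 - ζ ^ j - (ζ ^ j)⁻¹) =
      t * (n - t) := by
  obtain rfl | hn := n.eq_zero_or_pos
  · simp [Nat.le_zero.mp ht]
  set F : K → K := fun z ↦ (∑ k ∈ range t, z ^ k) * ∑ l ∈ range t, z⁻¹ ^ l
  have hratio : ∀ j ∈ Ico 1 n,
      (2 - ζ ^ (t * j) - (ζ ^ (t * j))⁻¹) / (2 - ζ ^ j - (ζ ^ j)⁻¹) = F (ζ ^ j) := by
    intro j hj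
    rw [mem_Ico] at hj
    rw [pow_mul', two_sub_pow_div_two_sub_eq_geom_sum_mul (pow_ne_zero j (hζ.ne_zero hn.ne'))
      (hζ.pow_ne_one_of_pos_of_lt (by omega) hj.2)]
  have hfull : ∑ j ∈ range n, F (ζ ^ j) = t * n := by
    simp only [F, sum_mul_sum]
    rw [sum_comm, sum_congr rfl fun k _ ↦ sum_comm]
    rw [sum_congr rfl fun k hk ↦ sum_congr rfl fun l hl ↦ hζ.sum_range_pow_mul_inv_pow
      ((mem_range.mp hk).trans_le ht) ((mem_range.mp hl).trans_le ht)]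
    simp +contextual
  have hsplit : ∑ j ∈ range n, F (ζ ^ j) = t * t + ∑ j ∈ Ico 1 n, F (ζ ^ j) := by
    rw [range_eq_Ico, sum_eq_sum_Ico_succ_bot hn]
    simp [F]
  rw [sum_congr rfl hratio]
  linear_combination hfull - hsplit

end IsPrimitiveRoot

end Field

theorem stmt15_general (q t : ℕ) (hq : 2 ≤ q) (ht2 : t ≤ q - 1) :
    (1 / (4 * (q : ℂ))) *
        (-(∑ j ∈ Finset.Ico 1 (2 * q),
            (2 - zeta (2 * q) ^ (t * j) - (zeta (2 * q) ^ (t * j))⁻¹) /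
              (2 - zeta (2 * q) ^ j - (zeta (2 * q) ^ j)⁻¹)) - 2 * (q : ℂ)) =
      ((t : ℂ) ^ 2 - 2 * q * t - 2 * q) / (4 * q) := by
  have hζ : IsPrimitiveRoot (zeta (2 * q)) (2 * q) := Complex.isPrimitiveRoot_exp _ (by omega)
  rw [hζ.sum_Ico_two_sub_pow_div_two_sub_eq (by omega)]
  push_cast
  ring

theorem stmt15 (q t : ℕ) (hq : 2 ≤ q) (ht1 : 1 ≤ t) (ht2 : t ≤ q - 1) :
    (1 / (4 * (q : ℂ))) *
        (-(∑ j ∈ Finset.Ico 1 (2 * q),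
            (2 - zeta (2 * q) ^ (t * j) - (zeta (2 * q) ^ (t * j))⁻¹) /
              (2 - zeta (2 * q) ^ j - (zeta (2 * q) ^ j)⁻¹)) - 2 * (q : ℂ)) =
      ((t : ℂ) ^ 2 - 2 * q * t - 2 * q) / (4 * q) :=
  stmt15_general q t hq ht2
end
end
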